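/- Let m ≥ 1 and k ≥ 1 be integers, let G1 and G2 be vertex-disjoint finite graphs, let U ⊆ V(G1) with q := |U| ≤ m − 2, let u ∈ V(G2), and let G = G1 ⊔ G2 be their disjoint union. Then a pattern (A, M) is feasible for (G, U ∪ {u}, m, k) if and only if there exist a feasible pattern (A1, M1) for (G1, U, m, k), a feasible pattern (s2, M2) for (G2, {u}, m, k), an element l of the multiset M1 with l + s2 ≤ k, and enumerations A1 = {x_1, …, x_q}, M1 ∖ {l} = {y_1, …, y_{m−1−q}}, and M2 = {z_1, …, z_{m−1}} (as multisets) such that x_t + z_t ≤ k for 1 ≤ t ≤ q, y_t + z_{q+t} ≤ k for 1 ≤ t ≤ m−1−q, A = {x_1 + z_1, …, x_q + z_q, l + s2} and M = {y_1 + z_{q+1}, …, y_{m−1−q} + z_{m−1}} (as multisets). -/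

import Mathlib

/-!
A coloring of the disjoint union is a coloring `c1` of `G1` together with a coloring `c2` of `G2`
whose colors are relabelled by a permutation `π`; the class of color `i` then has size
`f1 i + f2 (π⁻¹ i)`, where `f1`, `f2` are the class sizes of `c1`, `c2`. Injectivity on `U ∪ {u}`
says that `π` sends the color of `u` to a color unused on `U` (the one of class size `l`). Matching
colors through `π` pairs up the class sizes as in the enumerations `x`, `y`, `z`; conversely,
enumerations of the multisets of class sizes lift to enumerations of the colors themselves, and
matching those defines `π`.
-/

/-- `(A, M)` is a feasible pattern for the graph `G` restricted to the vertex set `S`,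
relative to the subset `W ⊆ S`, with `m` colors and class-size bound `k`: some coloring
of `S` that is proper for the edges of `G` inside `S`, has all color classes (within
`S`) of size at most `k`, and is injective on `W`, realizes `A` as the multiset of the
class sizes of the colors used on `W` and `M` as the multiset of the class sizes of the
remaining colors. -/
def PatternFeasible {V : Type*} [Fintype V] [DecidableEq V]
    (G : SimpleGraph V) (S W : Finset V) (m k : ℕ)
    (A M : Multiset ℕ) : Prop :=
  W ⊆ S ∧
  ∃ c : V → Fin m,
    (∀ x ∈ S, ∀ y ∈ S, G.Adj x y → c x ≠ c y) ∧
    (∀ i : Fin m, (S.filter (fun x => c x = i)).card ≤ k) ∧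
    Set.InjOn c (W : Set V) ∧
    A = (W.image c).val.map (fun i => (S.filter (fun x => c x = i)).card) ∧
    M = ((W.image c)ᶜ : Finset (Fin m)).val.map
          (fun i => (S.filter (fun x => c x = i)).card)

open Finset

theorem Multiset.exists_eq_ofFn_of_map_eq_ofFn {α β : Type*} [DecidableEq α] {f : α → β} :
    ∀ {n : ℕ} {s : Multiset α} {g : Fin n → β}, s.map f = List.ofFn g →
      ∃ e : Fin n → α, s = List.ofFn e ∧ f ∘ e = g
  | 0, s, g, h => ⟨Fin.elim0, by simpa using h, funext fun t => t.elim0⟩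
  | n + 1, s, g, h => by
    rw [List.ofFn_succ, ← Multiset.cons_coe, ← Multiset.map_eq_cons] at h
    obtain ⟨a, ha, hfa, hrest⟩ := h
    obtain ⟨e, he, hfe⟩ := exists_eq_ofFn_of_map_eq_ofFn hrest
    refine ⟨Fin.cons a e, ?_, ?_⟩
    · rw [List.ofFn_succ, ← Multiset.cons_coe]
      simpa [← he] using (Multiset.cons_erase ha).symm
    · ext t
      cases t using Fin.cases
      · exact hfa
      · exact congrFun hfe _

theorem Finset.exists_val_eq_ofFn {α : Type*} (s : Finset α) {n : ℕ} (h : #s = n) :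
    ∃ e : Fin n → α, s.val = List.ofFn e := by
  refine ⟨Subtype.val ∘ (s.equivFinOfCardEq h).symm, ?_⟩
  rw [← Fin.univ_val_map, ← Multiset.map_map, Multiset.map_univ_val_equiv]
  exact (Multiset.attach_map_val _).symm

theorem Function.bijective_of_coe_ofFn_eq_univ_val {α : Type*} [Fintype α] {n : ℕ}
    {e : Fin n → α} (h : (List.ofFn e : Multiset α) = univ.val) : e.Bijective := by
  refine ⟨List.nodup_ofFn.mp (Multiset.coe_nodup.mp (h ▸ univ.nodup)), fun a => ?_⟩
  have : a ∈ (List.ofFn e : Multiset α) := h ▸ mem_univ a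
  simpa [eq_comm] using this

theorem Function.Bijective.exists_equiv_apply_eq {ι α : Type*} {σ τ : ι → α}
    (hσ : σ.Bijective) (hτ : τ.Bijective) : ∃ π : α ≃ α, ∀ t, π.symm (τ t) = σ t :=
  ⟨(Equiv.ofBijective σ hσ).symm.trans (Equiv.ofBijective τ hτ), fun t => by simp⟩

namespace Finset

variable {α : Type*} [Fintype α] [DecidableEq α] {T : Finset α} {i : α}

theorem univ_val_eq_cons_val_compl_singleton (i : α) :
    univ.val = i ::ₘ ({i}ᶜ : Finset α).val := by
  rw [compl_singleton, erase_val, Multiset.cons_erase (mem_univ i)]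

theorem val_compl_eq_cons_val_erase (hi : i ∉ T) : Tᶜ.val = i ::ₘ (Tᶜ.erase i).val := by
  rw [erase_val, Multiset.cons_erase (mem_compl.mpr hi)]

theorem val_compl_singleton_eq_add (hi : i ∉ T) :
    ({i}ᶜ : Finset α).val = T.val + (Tᶜ.erase i).val := by
  have hdisj : Disjoint T (Tᶜ.erase i) := disjoint_compl_right.mono_right (erase_subset i Tᶜ)
  have : ({i}ᶜ : Finset α) = T.disjUnion (Tᶜ.erase i) hdisj := by
    ext j
    by_cases hj : j ∈ T
    · simp [hj, ne_of_mem_of_not_mem hj hi]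
    · simp [hj]
  rw [this, disjUnion_val]

theorem bijective_cons_of_val_compl_singleton {n : ℕ} {j : α} {g : Fin n → α}
    (hg : ({j}ᶜ : Finset α).val = List.ofFn g) :
    (Fin.cons j g : Fin (n + 1) → α).Bijective :=
  Function.bijective_of_coe_ofFn_eq_univ_val <| by
    rw [List.ofFn_cons, ← Multiset.cons_coe, ← hg, ← univ_val_eq_cons_val_compl_singleton]

end Finset

section ClassSize

variable {V κ : Type*} [DecidableEq κ]

def classSize (S : Finset V) (c : V → κ) (i : κ) : ℕ := #{x ∈ S | c x = i}

theorem classSize_union [DecidableEq V] {S T : Finset V} (h : Disjoint S T)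
    (c : V → κ) (i : κ) : classSize (S ∪ T) c i = classSize S c i + classSize T c i := by
  rw [classSize, filter_union, card_union_of_disjoint (disjoint_filter_filter h)]
  rfl

theorem classSize_mono {S T : Finset V} (h : S ⊆ T) (c : V → κ) (i : κ) :
    classSize S c i ≤ classSize T c i :=
  card_le_card (filter_subset_filter _ h)

theorem classSize_congr {S : Finset V} {c c' : V → κ} (h : Set.EqOn c c' S) :
    classSize S c = classSize S c' :=
  funext fun _ => congrArg card (filter_congr fun _ hx => by rw [h hx])

theorem classSize_equiv_comp (π : κ ≃ κ) (S : Finset V) (c : V → κ) (i : κ) :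
    classSize S (π ∘ c) i = classSize S c (π.symm i) := by
  simp only [classSize, Function.comp_apply, ← Equiv.eq_symm_apply]

end ClassSize

def IsPatternMerge (k q r : ℕ) (A1 M1 : Multiset ℕ) (s2 : ℕ) (M2 A M : Multiset ℕ) : Prop :=
  ∃ (l : ℕ) (x z1 : Fin q → ℕ) (y z2 : Fin r → ℕ),
    l ∈ M1 ∧ l + s2 ≤ k ∧
    A1 = (List.ofFn x : Multiset ℕ) ∧ M1.erase l = (List.ofFn y : Multiset ℕ) ∧
    M2 = (List.ofFn z1 : Multiset ℕ) + (List.ofFn z2 : Multiset ℕ) ∧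
    (∀ t, x t + z1 t ≤ k) ∧ (∀ t, y t + z2 t ≤ k) ∧
    A = (List.ofFn (fun t => x t + z1 t) : Multiset ℕ) + {l + s2} ∧
    M = (List.ofFn (fun t => y t + z2 t) : Multiset ℕ)

theorem isPatternMerge_of_add {m q k : ℕ} {f1 f2 : Fin m → ℕ} (hk : ∀ i, f1 i + f2 i ≤ k)
    {T : Finset (Fin m)} (hT : #T = q) {i : Fin m} (hi : i ∉ T) :
    IsPatternMerge k q (m - 1 - q) (T.val.map f1) (Tᶜ.val.map f1) (f2 i)
      (({i}ᶜ : Finset (Fin m)).val.map f2)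
      ((insert i T).val.map (f1 + f2)) ((insert i T)ᶜ.val.map (f1 + f2)) := by
  have hcard : #(Tᶜ.erase i) = m - 1 - q := by
    rw [card_erase_of_mem (mem_compl.2 hi), card_compl, Fintype.card_fin, hT]
    omega
  obtain ⟨a, ha⟩ := T.exists_val_eq_ofFn hT
  obtain ⟨b, hb⟩ := (Tᶜ.erase i).exists_val_eq_ofFn hcard
  refine ⟨f1 i, f1 ∘ a, f2 ∘ a, f1 ∘ b, f2 ∘ b, Multiset.mem_map_of_mem _ (mem_compl.2 hi),
    hk i, ?_, ?_, ?_, fun t => hk _, fun t => hk _, ?_, ?_⟩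
  · rw [ha, Multiset.map_coe, List.map_ofFn]
  · rw [val_compl_eq_cons_val_erase hi, Multiset.map_cons, Multiset.erase_cons_head, hb,
      Multiset.map_coe, List.map_ofFn]
  · rw [val_compl_singleton_eq_add hi, Multiset.map_add, ha, hb, Multiset.map_coe,
      Multiset.map_coe, List.map_ofFn, List.map_ofFn]
  · rw [insert_val_of_notMem hi, Multiset.map_cons, ha, Multiset.map_coe, List.map_ofFn,
      ← Multiset.singleton_add, add_comm]
    rfl
  · rw [compl_insert, hb, Multiset.map_coe, List.map_ofFn]
    rfl

theorem exists_equiv_of_isPatternMerge {m q k : ℕ} {f1 f2 : Fin m → ℕ} {T : Finset (Fin m)}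
    {j : Fin m} {A M : Multiset ℕ}
    (h : IsPatternMerge k q (m - 1 - q) (T.val.map f1) (Tᶜ.val.map f1) (f2 j)
      (({j}ᶜ : Finset (Fin m)).val.map f2) A M) :
    ∃ π : Fin m ≃ Fin m, π j ∉ T ∧ (∀ i, f1 i + f2 (π.symm i) ≤ k) ∧
      A = (insert (π j) T).val.map (fun i => f1 i + f2 (π.symm i)) ∧
      M = (insert (π j) T)ᶜ.val.map (fun i => f1 i + f2 (π.symm i)) := by
  obtain ⟨l, x, z1, y, z2, hl, hlk, hx, hy, hz, hxz, hyz, rfl, rfl⟩ := h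
  obtain ⟨i, hi, rfl⟩ : ∃ i ∉ T, f1 i = l := by simpa using hl
  obtain ⟨a, ha, rfl⟩ := Multiset.exists_eq_ofFn_of_map_eq_ofFn hx
  rw [val_compl_eq_cons_val_erase hi, Multiset.map_cons, Multiset.erase_cons_head] at hy
  obtain ⟨b, hb, rfl⟩ := Multiset.exists_eq_ofFn_of_map_eq_ofFn hy
  rw [Multiset.coe_add, ← List.ofFn_fin_append] at hz
  obtain ⟨g, hg, hfg⟩ := Multiset.exists_eq_ofFn_of_map_eq_ofFn hz
  have hab : ({i}ᶜ : Finset (Fin m)).val = List.ofFn (Fin.append a b) := by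
    rw [val_compl_singleton_eq_add hi, ha, hb, List.ofFn_fin_append, Multiset.coe_add]
  -- `Fin.cons j g` and `Fin.cons i (Fin.append a b)` list the colors of the two sides in matching
  -- order (the special color first, then those paired with `x`, then those paired with `y`).
  obtain ⟨π, hπ⟩ := (bijective_cons_of_val_compl_singleton hg).exists_equiv_apply_eq
    (bijective_cons_of_val_compl_singleton hab)
  have hπi : π.symm i = j := hπ 0
  have hπj : π j = i := by rw [← π.apply_symm_apply i, hπi]
  have hπa (t) : f2 (π.symm (a t)) = z1 t := by
    have := hπ (Fin.succ (Fin.castAdd _ t))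
    simp only [Fin.cons_succ, Fin.append_left] at this
    rw [this, ← Function.comp_apply (f := f2), hfg, Fin.append_left]
  have hπb (t) : f2 (π.symm (b t)) = z2 t := by
    have := hπ (Fin.succ (Fin.natAdd _ t))
    simp only [Fin.cons_succ, Fin.append_right] at this
    rw [this, ← Function.comp_apply (f := f2), hfg, Fin.append_right]
  refine ⟨π, hπj ▸ hi, fun i' => ?_, ?_, ?_⟩
  · obtain ⟨t, rfl⟩ := (bijective_cons_of_val_compl_singleton hab).2 i'
    induction t using Fin.cases with
    | zero => simpa only [Fin.cons_zero, hπi] using hlk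
    | succ t =>
      induction t using Fin.addCases with
      | left t =>
        simpa only [Fin.cons_succ, Fin.append_left, hπa, Function.comp_apply] using hxz t
      | right t =>
        simpa only [Fin.cons_succ, Fin.append_right, hπb, Function.comp_apply] using hyz t
  · rw [hπj, insert_val_of_notMem hi, Multiset.map_cons, ha, Multiset.map_coe, List.map_ofFn,
      hπi, ← Multiset.singleton_add, add_comm]
    simp only [Function.comp_def, hπa]
  · rw [hπj, compl_insert, hb, Multiset.map_coe, List.map_ofFn]
    simp only [Function.comp_def, hπb]

section Coloring

variable {V : Type*} [Fintype V] [DecidableEq V] {G : SimpleGraph V} {m k : ℕ}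

theorem patternFeasible_restrict {S W : Finset V} (hWS : W ⊆ S) {c : V → Fin m}
    (hc : ∀ x y, G.Adj x y → c x ≠ c y) (hk : ∀ i, classSize univ c i ≤ k)
    (hinj : Set.InjOn c W) :
    PatternFeasible G S W m k ((W.image c).val.map (classSize S c))
      ((W.image c)ᶜ.val.map (classSize S c)) :=
  ⟨hWS, c, fun x _ y _ => hc x y, fun i => (classSize_mono (subset_univ S) c i).trans (hk i),
    hinj, rfl, rfl⟩

variable {S1 S2 U : Finset V} {u : V}

theorem exists_isPatternMerge_of_coloring {q : ℕ} (hdisj : Disjoint S1 S2)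
    (hcover : S1 ∪ S2 = univ) (hU : U ⊆ S1) (hq : #U = q) (hu : u ∈ S2) {c : V → Fin m}
    (hc : ∀ x y, G.Adj x y → c x ≠ c y) (hk : ∀ i, classSize univ c i ≤ k)
    (hinj : Set.InjOn c ((insert u U : Finset V) : Set V)) :
    ∃ A1 M1 s2 M2, PatternFeasible G S1 U m k A1 M1 ∧ PatternFeasible G S2 {u} m k {s2} M2 ∧
      IsPatternMerge k q (m - 1 - q) A1 M1 s2 M2
        (((insert u U).image c).val.map (classSize univ c))
        (((insert u U).image c)ᶜ.val.map (classSize univ c)) := by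
  have huU : u ∉ U := fun h => disjoint_left.1 hdisj (hU h) hu
  have hsplit : classSize univ c = classSize S1 c + classSize S2 c :=
    funext fun i => by rw [← hcover, classSize_union hdisj]; rfl
  rw [coe_insert, Set.injOn_insert (by simpa using huU)] at hinj
  have hcu : c u ∉ U.image c := by simpa using hinj.2
  refine ⟨_, _, classSize S2 c (c u), ({c u}ᶜ : Finset (Fin m)).val.map (classSize S2 c),
    patternFeasible_restrict hU hc hk hinj.1, ?_, ?_⟩
  · simpa using patternFeasible_restrict (singleton_subset_iff.2 hu) hc hk (by simp)
  · rw [image_insert, hsplit]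
    exact isPatternMerge_of_add (fun i => (congrFun hsplit i).ge.trans (hk i))
      (by rw [card_image_of_injOn hinj.1, hq]) hcu

theorem patternFeasible_of_isPatternMerge {q : ℕ} {A1 M1 M2 A M : Multiset ℕ} {s2 : ℕ}
    (hdisj : Disjoint S1 S2) (hcover : S1 ∪ S2 = univ)
    (hEdges : ∀ x y : V, G.Adj x y → (x ∈ S1 ∧ y ∈ S1) ∨ (x ∈ S2 ∧ y ∈ S2))
    (hU : U ⊆ S1) (hu : u ∈ S2) (h1 : PatternFeasible G S1 U m k A1 M1)
    (h2 : PatternFeasible G S2 {u} m k {s2} M2)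
    (h : IsPatternMerge k q (m - 1 - q) A1 M1 s2 M2 A M) :
    PatternFeasible G univ (insert u U) m k A M := by
  obtain ⟨-, c1, hc1, -, hinj1, rfl, rfl⟩ := h1
  obtain ⟨-, c2, hc2, -, -, hs2, rfl⟩ := h2
  obtain rfl : s2 = classSize S2 c2 (c2 u) := by simpa [classSize] using hs2
  obtain ⟨π, hπ, hk, rfl, rfl⟩ :=
    exists_equiv_of_isPatternMerge (f1 := classSize S1 c1) (f2 := classSize S2 c2) h
  set c : V → Fin m := fun v => if v ∈ S2 then π (c2 v) else c1 v
  have hcS1 : Set.EqOn c c1 S1 := fun v hv => if_neg (disjoint_left.1 hdisj hv)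
  have hcS2 : Set.EqOn c (π ∘ c2) S2 := fun v hv => if_pos hv
  have hsize : classSize univ c = fun i => classSize S1 c1 i + classSize S2 c2 (π.symm i) := by
    funext i
    rw [← hcover, classSize_union hdisj, classSize_congr hcS1, classSize_congr hcS2,
      classSize_equiv_comp]
  have himage : (insert u U).image c = insert (π (c2 u)) (U.image c1) := by
    rw [image_insert, image_congr (hcS1.mono hU)]
    exact congrArg (insert · _) (hcS2 hu)
  refine ⟨subset_univ _, c, fun x _ y _ hxy => ?_, fun i => (congrFun hsize i).trans_le (hk i),
    ?_, himage ▸ congrArg (Multiset.map · _) hsize.symm,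
    himage ▸ congrArg (Multiset.map · _) hsize.symm⟩
  · rcases hEdges x y hxy with ⟨hx, hy⟩ | ⟨hx, hy⟩
    · rw [hcS1 hx, hcS1 hy]
      exact hc1 x hx y hy hxy
    · rw [hcS2 hx, hcS2 hy]
      exact π.injective.ne (hc2 x hx y hy hxy)
  · have huU : u ∉ U := fun h => disjoint_left.1 hdisj (hU h) hu
    rw [coe_insert, Set.injOn_insert (by simpa using huU)]
    refine ⟨hinj1.congr (hcS1.mono hU).symm, fun ⟨v, hv, hvu⟩ => hπ ?_⟩
    exact mem_image.2 ⟨v, hv, (hcS1 (hU hv)).symm.trans (hvu.trans (hcS2 hu))⟩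

end Coloring

theorem pattern_merge_within_block_general {V : Type*} [Fintype V] [DecidableEq V]
    (m k : ℕ) (G : SimpleGraph V) (S1 S2 : Finset V)
    (hdisj : Disjoint S1 S2) (hcover : S1 ∪ S2 = Finset.univ)
    (hEdges : ∀ x y : V, G.Adj x y → (x ∈ S1 ∧ y ∈ S1) ∨ (x ∈ S2 ∧ y ∈ S2))
    (U : Finset V) (hU : U ⊆ S1) (q : ℕ) (hq : U.card = q)
    (u : V) (hu : u ∈ S2)
    (A M : Multiset ℕ) :
    PatternFeasible G Finset.univ (insert u U) m k A M ↔
      ∃ (A1 M1 : Multiset ℕ) (s2 : ℕ) (M2 : Multiset ℕ) (l : ℕ)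
        (x z1 : Fin q → ℕ) (y z2 : Fin (m - 1 - q) → ℕ),
        PatternFeasible G S1 U m k A1 M1 ∧
        PatternFeasible G S2 {u} m k {s2} M2 ∧
        l ∈ M1 ∧ l + s2 ≤ k ∧
        A1 = (List.ofFn x : Multiset ℕ) ∧
        M1.erase l = (List.ofFn y : Multiset ℕ) ∧
        M2 = (List.ofFn z1 : Multiset ℕ) + (List.ofFn z2 : Multiset ℕ) ∧
        (∀ t : Fin q, x t + z1 t ≤ k) ∧
        (∀ t : Fin (m - 1 - q), y t + z2 t ≤ k) ∧
        A = (List.ofFn (fun t => x t + z1 t) : Multiset ℕ) + {l + s2} ∧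
        M = (List.ofFn (fun t => y t + z2 t) : Multiset ℕ) := by
  constructor
  · rintro ⟨-, c, hc, hk, hinj, rfl, rfl⟩
    obtain ⟨A1, M1, s2, M2, h1, h2, l, x, z1, y, z2, h⟩ :=
      exists_isPatternMerge_of_coloring hdisj hcover hU hq hu
        (fun x y hxy => hc x (mem_univ x) y (mem_univ y) hxy) hk hinj
    exact ⟨A1, M1, s2, M2, l, x, z1, y, z2, h1, h2, h⟩
  · rintro ⟨A1, M1, s2, M2, l, x, z1, y, z2, h1, h2, h⟩
    exact patternFeasible_of_isPatternMerge hdisj hcover hEdges hU hu h1 h2 ⟨l, x, z1, y, z2, h⟩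

/-- Merging patterns of disjoint branches hanging below distinct vertices of one block:
if `G` is the disjoint union of two graphs with vertex sets `S1`, `S2` (every edge lies
inside `S1` or inside `S2`), `U ⊆ S1` with `|U| = q ≤ m - 2` and `u ∈ S2`, then `(A, M)`
is a feasible pattern for `(G, U ∪ {u}, m, k)` iff it arises from a feasible pattern
`(A1, M1)` for `(G1, U)` and a feasible pattern `(s2, M2)` for `(G2, u)`, an element
`l ∈ M1` with `l + s2 ≤ k`, and enumerations `x` of `A1`, `y` of `M1 ∖ {l}` and
`z1 ++ z2` of `M2` with the indicated pairwise sums bounded by `k`, realizing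
`A = {x t + z1 t} + {l + s2}` and `M = {y t + z2 t}`. -/
theorem pattern_merge_within_block {V : Type*} [Fintype V] [DecidableEq V]
    (m k : ℕ) (hm : 1 ≤ m) (hk : 1 ≤ k)
    (G : SimpleGraph V) (S1 S2 : Finset V)
    (hdisj : Disjoint S1 S2) (hcover : S1 ∪ S2 = Finset.univ)
    (hEdges : ∀ x y : V, G.Adj x y → (x ∈ S1 ∧ y ∈ S1) ∨ (x ∈ S2 ∧ y ∈ S2))
    (U : Finset V) (hU : U ⊆ S1) (q : ℕ) (hq : U.card = q) (hqm : q ≤ m - 2)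
    (u : V) (hu : u ∈ S2)
    (A M : Multiset ℕ) :
    PatternFeasible G Finset.univ (insert u U) m k A M ↔
      ∃ (A1 M1 : Multiset ℕ) (s2 : ℕ) (M2 : Multiset ℕ) (l : ℕ)
        (x z1 : Fin q → ℕ) (y z2 : Fin (m - 1 - q) → ℕ),
        PatternFeasible G S1 U m k A1 M1 ∧
        PatternFeasible G S2 {u} m k {s2} M2 ∧
        l ∈ M1 ∧ l + s2 ≤ k ∧
        A1 = (List.ofFn x : Multiset ℕ) ∧
        M1.erase l = (List.ofFn y : Multiset ℕ) ∧
        M2 = (List.ofFn z1 : Multiset ℕ) + (List.ofFn z2 : Multiset ℕ) ∧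
        (∀ t : Fin q, x t + z1 t ≤ k) ∧
        (∀ t : Fin (m - 1 - q), y t + z2 t ≤ k) ∧
        A = (List.ofFn (fun t => x t + z1 t) : Multiset ℕ) + {l + s2} ∧
        M = (List.ofFn (fun t => y t + z2 t) : Multiset ℕ) :=
  pattern_merge_within_block_general m k G S1 S2 hdisj hcover hEdges U hU q hq u hu A M
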